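/- Let T be a Marco–Martens map on the probability space (X, ℬ, m) with Marco–Martens cover {X_j}_{j≥0}, and suppose in addition that T is ergodic with respect to m, i.e. every A ∈ ℬ with T⁻¹(A) = A satisfies m(A) = 0 or m(X \ A) = 0. Then the σ-finite T-invariant measure equivalent to m is unique up to a positive multiplicative constant: if μ₁ and μ₂ are σ-finite T-invariant measures on (X, ℬ), each equivalent to m, then there exists a constant c > 0 such that μ₁ = c·μ₂. -/

import Mathlib

open MeasureTheory Set Filter

/-- `MMY Xs j = Y_j := X_j \ ⋃_{i < j} X_i`. -/
def MMY {X : Type*} (Xs : ℕ → Set X) (j : ℕ) : Set X := Xs j \ ⋃ i ∈ Set.Iio j, Xs i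

/-- `T` is a Marco–Martens map on the probability space `(X, ℬ, m)` with Marco–Martens cover
`(X_j)_{j ≥ 0}` and constants `(K_j)_{j ≥ 0}` (condition (4)): `T` is measurable, maps
measurable sets to measurable sets, `m` is quasi-invariant under `T`, and conditions
(2)–(6) of the definition hold. -/
structure MarcoMartens {X : Type*} [MeasurableSpace X] (m : Measure X) (T : X → X)
    (Xs : ℕ → Set X) (K : ℕ → ℝ) : Prop where
  measurable_T : Measurable T
  image_meas : ∀ A : Set X, MeasurableSet A → MeasurableSet (T '' A)
  quasi_invariant : m.map T ≪ m
  meas_Xs : ∀ j, MeasurableSet (Xs j)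
  cover : m (univ \ ⋃ n, Xs n) = 0
  cond3 : ∀ i j : ℕ, ∃ k : ℕ, 0 < m (Xs i ∩ T^[k] ⁻¹' Xs j)
  one_le_K : ∀ j, 1 ≤ K j
  cond4 : ∀ j : ℕ, ∀ A B : Set X, MeasurableSet A → MeasurableSet B →
    A ⊆ Xs j → B ⊆ Xs j → ∀ n : ℕ,
    m (T^[n] ⁻¹' A) * m B ≤ ENNReal.ofReal (K j) * (m A * m (T^[n] ⁻¹' B))
  cond5 : ∑' n : ℕ, m (T^[n] ⁻¹' Xs 0) = ⊤
  cond6 : Tendsto (fun l : ℕ => m (T '' ⋃ j ∈ Set.Ici l, MMY Xs j)) atTop (nhds 0)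

/-- `mseq m T Xs A n = m_n(A) := (Σ_{k=0}^n m(T^{-k}A)) / (Σ_{k=0}^n m(T^{-k}X_0))`. -/
noncomputable def mseq {X : Type*} [MeasurableSpace X] (m : Measure X) (T : X → X)
    (Xs : ℕ → Set X) (A : Set X) (n : ℕ) : ℝ :=
  (∑ k ∈ Finset.range (n + 1), (m (T^[k] ⁻¹' A)).toReal) /
    (∑ k ∈ Finset.range (n + 1), (m (T^[k] ⁻¹' Xs 0)).toReal)

/-!
Conditions (2)–(5) make `T` conservative: by bounded distortion (4) and the divergence (5),
transported through (3), `∑ₙ m(T⁻ⁿA) = ∞` for every non-null `A ⊆ Xⱼ`, while the preimages of a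
wandering set are disjoint and so have summable measures.

For a conservative map, a σ-finite measure `ρ ≪ μ` with `T₊ρ ≤ ρ` is invariant: writing
`ρ = T₊ρ + δ` and telescoping gives `∑ₙ δ(T⁻ⁿA) ≤ ρ(A) < ∞`, which Poincaré recurrence
forbids unless `δ(A) = 0`. With `h = dμ₁/dμ₂`, this applies to `ρ = min(h, c)·μ₂`, whose
push-forward is dominated by both `μ₁` and `c·μ₂`; hence `(h - c)·μ₂ = μ₁ - ρ` is invariant too,
which makes `{h > c}` invariant mod `μ₂`. So `h ∘ T = h` a.e., and ergodicity makes `h` constant.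
-/

open Function
open scoped ENNReal NNReal

theorem Function.pairwise_disjoint_preimage_iterate {α : Type*} {f : α → α} {s : Set α}
    (h : ∀ x ∈ s, ∀ n ≠ 0, f^[n] x ∉ s) : Pairwise (Disjoint on fun n => f^[n] ⁻¹' s) :=
  (pairwise_disjoint_on _).2 fun a b hab => Set.disjoint_left.2 fun x hxa hxb =>
    h _ hxa (b - a) (by omega) (by rwa [← iterate_add_apply, Nat.sub_add_cancel hab.le])

namespace MeasureTheory

variable {α : Type*} [MeasurableSpace α] {μ ν ρ δ : Measure α} {f : α → α} {s : Set α}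

theorem Measure.exists_add_eq_of_le [SigmaFinite ρ] (h : ν ≤ ρ) : ∃ δ, ν + δ = ρ := by
  have : SigmaFinite ν := Measure.sigmaFinite_of_le ρ h
  set r := ν.rnDeriv ρ
  refine ⟨ρ.withDensity (1 - r), ?_⟩
  conv_lhs => rw [← Measure.withDensity_rnDeriv_eq ν ρ (Measure.absolutelyContinuous_of_le h)]
  rw [← withDensity_add_left (Measure.measurable_rnDeriv ν ρ)]
  conv_rhs => rw [← withDensity_one (μ := ρ)]
  refine withDensity_congr_ae ?_
  filter_upwards [Measure.rnDeriv_le_one_of_le h] with x hx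
  exact add_tsub_cancel_of_le hx

theorem withDensity_min_le {g : α → ℝ≥0∞} (hg : Measurable g) (c : ℝ≥0∞)
    (hg' : ν ≤ μ.withDensity g) (hc : ν ≤ c • μ) : ν ≤ μ.withDensity fun x => min (g x) c := by
  refine Measure.le_iff.2 fun t ht => ?_
  have hle : MeasurableSet {x | g x ≤ c} := measurableSet_le hg measurable_const
  have hlow : ν (t ∩ {x | g x ≤ c}) ≤ ∫⁻ x in t ∩ {x | g x ≤ c}, min (g x) c ∂μ := by
    rw [setLIntegral_congr_fun (ht.inter hle) fun x hx => min_eq_left hx.2,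
      ← withDensity_apply _ (ht.inter hle)]
    exact hg' _
  have hhigh : ν (t \ {x | g x ≤ c}) ≤ ∫⁻ x in t \ {x | g x ≤ c}, min (g x) c ∂μ := by
    rw [setLIntegral_congr_fun (ht.diff hle) fun x hx => min_eq_right (not_le.1 hx.2).le,
      setLIntegral_const]
    exact hc _
  rw [withDensity_apply _ ht, ← measure_inter_add_sdiff t hle,
    ← lintegral_inter_add_sdiff _ t hle]
  exact add_le_add hlow hhigh

theorem MeasurePreserving.of_measure_preimage_eq (hf : Measurable f)
    (h : ∀ A, MeasurableSet A → μ (f ⁻¹' A) = μ A) : MeasurePreserving f μ μ :=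
  ⟨hf, Measure.ext fun A hA => by rw [Measure.map_apply hf hA, h A hA]⟩

theorem PreErgodic.of_measure_eq_zero_or_compl
    (h : ∀ A, MeasurableSet A → f ⁻¹' A = A → μ A = 0 ∨ μ Aᶜ = 0) : PreErgodic f μ :=
  ⟨fun A hA hfA => eventuallyConst_set.2 <|
    (h A hA hfA).symm.imp mem_ae_iff.2 measure_eq_zero_iff_ae_notMem.1⟩

theorem PreErgodic.congr_ae (hf : PreErgodic f μ) (h : ae μ = ae ν) : PreErgodic f ν :=
  ⟨fun _ hs hfs => h ▸ hf.aeconst_set hs hfs⟩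

namespace Conservative

theorem measure_eq_zero_of_tsum_ne_top (hf : Conservative f μ) (hδ : δ ≪ μ)
    (hs : MeasurableSet s) (hsum : ∑' n, δ (f^[n] ⁻¹' s) ≠ ∞) : δ s = 0 := by
  have hrec : ∀ᵐ x ∂δ, x ∈ s → ∃ᶠ n in atTop, f^[n] x ∈ s :=
    hδ.ae_le (hf.ae_mem_imp_frequently_image_mem hs.nullMeasurableSet)
  have htail : ∀ N, δ s ≤ ∑' i, δ (f^[i + N] ⁻¹' s) := fun N => calc
    δ s ≤ δ (⋃ i, f^[i + N] ⁻¹' s) := measure_mono_ae <| hrec.mono fun x hx hxs => by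
        obtain ⟨n, hn, hns⟩ := frequently_atTop.1 (hx hxs) N
        exact mem_iUnion.2 ⟨n - N, by rwa [mem_preimage, Nat.sub_add_cancel hn]⟩
    _ ≤ _ := measure_iUnion_le _
  exact nonpos_iff_eq_zero.1 (ge_of_tendsto' (ENNReal.tendsto_sum_nat_add _ hsum) htail)

theorem map_eq_of_map_le [SigmaFinite ρ] (hf : Conservative f μ) (hρ : ρ ≪ μ)
    (hle : ρ.map f ≤ ρ) : ρ.map f = ρ := by
  obtain ⟨δ, hδ⟩ := Measure.exists_add_eq_of_le hle
  have hfm := hf.measurable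
  have hstep : ∀ {A}, MeasurableSet A → ∀ n,
      ρ (f^[n] ⁻¹' A) = ρ (f^[n + 1] ⁻¹' A) + δ (f^[n] ⁻¹' A) := by
    intro A hA n
    conv_lhs => rw [← hδ]
    rw [Measure.add_apply, Measure.map_apply hfm (hfm.iterate n hA), ← preimage_comp,
      ← iterate_succ]
  have htel : ∀ {A}, MeasurableSet A → ∀ N,
      (∑ n ∈ Finset.range N, δ (f^[n] ⁻¹' A)) + ρ (f^[N] ⁻¹' A) = ρ A := by
    intro A hA N
    induction N with
    | zero => simp
    | succ N ih => rw [Finset.sum_range_succ, add_assoc, add_comm (δ _), ← hstep hA, ih]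
  have hδρ : δ ≤ ρ := hδ ▸ Measure.le_add_left le_rfl
  have hδ0 : ∀ A, MeasurableSet A → ρ A ≠ ∞ → δ A = 0 := fun A hA hρA =>
    hf.measure_eq_zero_of_tsum_ne_top ((Measure.absolutelyContinuous_of_le hδρ).trans hρ) hA <|
      ne_top_of_le_ne_top hρA (ENNReal.tsum_le_of_sum_range_le fun N => htel hA N ▸ le_self_add)
  have hδ_univ : δ univ = 0 := by
    rw [← iUnion_spanningSets ρ]
    exact measure_iUnion_null fun k =>
      hδ0 _ (measurableSet_spanningSets ρ k) (measure_spanningSets_lt_top ρ k).ne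
  rwa [Measure.measure_univ_eq_zero.1 hδ_univ, add_zero] at hδ

theorem preimage_ae_eq_of_ae_le_preimage (hf : Conservative f μ) (hs : MeasurableSet s)
    (hsub : s ≤ᵐ[μ] f ⁻¹' s) : f ⁻¹' s =ᵐ[μ] s := by
  refine EventuallyLE.antisymm ?_ hsub
  have hfwd : ∀ᵐ x ∂μ, ∀ n, f^[n] x ∈ s → f^[n + 1] x ∈ s := ae_all_iff.2 fun n => by
    filter_upwards [(hf.toQuasiMeasurePreserving.iterate n).ae hsub] with x hx
    rwa [iterate_succ_apply']
  filter_upwards [hfwd, hf.ae_mem_imp_frequently_image_mem hs.compl.nullMeasurableSet]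
    with x hfwd hrec hx
  by_contra hxs
  have hstay : ∀ k, f^[k + 1] x ∈ s := fun k => by
    induction k with
    | zero => exact hx
    | succ k ih => exact hfwd _ ih
  obtain ⟨n, hn, hns⟩ := frequently_atTop.1 (hrec hxs) 1
  obtain ⟨k, rfl⟩ : ∃ k, n = k + 1 := ⟨n - 1, by omega⟩
  exact hns (hstay k)

variable {μ₁ μ₂ : Measure α} [SigmaFinite μ₁] [SigmaFinite μ₂]

theorem preimage_setOf_lt_rnDeriv_ae_eq (hf : Conservative f μ₂)
    (h₁ : MeasurePreserving f μ₁ μ₁) (h₂ : MeasurePreserving f μ₂ μ₂) (hμ : μ₁ ≪ μ₂) (c : ℝ≥0∞) :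
    f ⁻¹' {x | c < μ₁.rnDeriv μ₂ x} =ᵐ[μ₂] {x | c < μ₁.rnDeriv μ₂ x} := by
  set h := μ₁.rnDeriv μ₂
  have hh : Measurable h := Measure.measurable_rnDeriv μ₁ μ₂
  have hs : MeasurableSet {x | c < h x} := measurableSet_lt measurable_const hh
  have hh_sub : Measurable fun x => h x - c := hh.sub measurable_const
  set ρ := μ₂.withDensity fun x => min (h x) c
  set κ := μ₂.withDensity fun x => h x - c
  have hsplit : κ + ρ = μ₁ := by
    rw [← withDensity_add_left hh_sub]
    conv_rhs => rw [← Measure.withDensity_rnDeriv_eq μ₁ μ₂ hμ]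
    congr 1
    funext x
    exact tsub_add_min
  have hρ₁ : ρ ≤ μ₁ := hsplit ▸ Measure.le_add_left le_rfl
  have : SigmaFinite ρ := Measure.sigmaFinite_of_le μ₁ hρ₁
  have hρ : ρ.map f = ρ := by
    refine hf.map_eq_of_map_le (withDensity_absolutelyContinuous _ _)
      (withDensity_min_le hh c ?_ ?_)
    · calc ρ.map f ≤ μ₁.map f := Measure.map_mono hρ₁ hf.measurable
        _ = μ₂.withDensity h := by rw [h₁.map_eq, Measure.withDensity_rnDeriv_eq μ₁ μ₂ hμ]
    · calc ρ.map f ≤ (c • μ₂).map f :=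
          Measure.map_mono (withDensity_const c ▸ withDensity_mono
            (Eventually.of_forall fun x => min_le_right _ _)) hf.measurable
        _ = c • μ₂ := by rw [Measure.map_smul, h₂.map_eq]
  have hκ : κ.map f = κ := (Measure.add_right_inj ρ _ _).1 <| by
    rw [add_comm ρ κ, hsplit, ← h₁.map_eq, ← hsplit, Measure.map_add _ _ hf.measurable, hρ,
      add_comm]
  have hpos : {x | h x - c ≠ 0} = {x | c < h x} := by
    ext x
    simp [tsub_eq_zero_iff_le]
  have hκ_out : κ (f ⁻¹' {x | c < h x}ᶜ) = 0 := by
    rw [← Measure.map_apply hf.measurable hs.compl, hκ,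
      withDensity_apply_eq_zero hh_sub, hpos, inter_compl_self, measure_empty]
  rw [withDensity_apply_eq_zero hh_sub, hpos] at hκ_out
  refine hf.preimage_ae_eq_of_ae_le_preimage hs (ae_le_set.2 ?_)
  rwa [sdiff_eq, ← preimage_compl]

theorem rnDeriv_comp_aeEq (hf : Conservative f μ₂) (h₁ : MeasurePreserving f μ₁ μ₁)
    (h₂ : MeasurePreserving f μ₂ μ₂) (hμ : μ₁ ≪ μ₂) :
    μ₁.rnDeriv μ₂ ∘ f =ᵐ[μ₂] μ₁.rnDeriv μ₂ :=
  .of_forall_eventually_gt_iff fun c => (hf.preimage_setOf_lt_rnDeriv_ae_eq h₁ h₂ hμ c).mem_iff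

end Conservative

theorem Measure.exists_pos_eq_smul_of_rnDeriv_ae_eq_const {μ₁ μ₂ : Measure α} [SigmaFinite μ₁]
    [SigmaFinite μ₂] (hμ : μ₁ ≪ μ₂) (h0 : μ₁ ≠ 0) {c : ℝ≥0∞}
    (hc : μ₁.rnDeriv μ₂ =ᵐ[μ₂] fun _ => c) : ∃ c : ℝ≥0, 0 < c ∧ μ₁ = c • μ₂ := by
  have hμ₁ : μ₁ = c • μ₂ := by
    rw [← Measure.withDensity_rnDeriv_eq μ₁ μ₂ hμ, withDensity_congr_ae hc, withDensity_const]
  have : (ae μ₂).NeBot :=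
    ae_neBot.2 fun h => h0 (Measure.absolutelyContinuous_zero_iff.1 (h ▸ hμ))
  have hc_top : c ≠ ∞ := by
    obtain ⟨x, hx, hxc⟩ := ((Measure.rnDeriv_lt_top μ₁ μ₂).and hc).exists
    exact (show μ₁.rnDeriv μ₂ x = c from hxc) ▸ hx.ne
  have hc0 : c ≠ 0 := by
    rintro rfl
    exact h0 (by rw [hμ₁, zero_smul])
  refine ⟨c.toNNReal, ENNReal.toNNReal_pos hc0 hc_top, ?_⟩
  rw [ENNReal.smul_def, ENNReal.coe_toNNReal hc_top, hμ₁]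

end MeasureTheory

namespace MarcoMartens

variable {X : Type*} [MeasurableSpace X] {m : Measure X} {T : X → X} {Xs : ℕ → Set X}
  {K : ℕ → ℝ}

theorem quasiMeasurePreserving (hMM : MarcoMartens m T Xs K) :
    Measure.QuasiMeasurePreserving T m m :=
  ⟨hMM.measurable_T, hMM.quasi_invariant⟩

variable [IsFiniteMeasure m]

theorem tsum_measure_preimage_eq_top_of_subset (hMM : MarcoMartens m T Xs K) {j : ℕ}
    {A B : Set X} (hA : MeasurableSet A) (hB : MeasurableSet B) (hAj : A ⊆ Xs j)
    (hBj : B ⊆ Xs j) (hA0 : m A ≠ 0) (hBsum : ∑' n, m (T^[n] ⁻¹' B) = ∞) :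
    ∑' n, m (T^[n] ⁻¹' A) = ∞ := by
  have key : (∑' n, m (T^[n] ⁻¹' B)) * m A ≤
      ENNReal.ofReal (K j) * m B * ∑' n, m (T^[n] ⁻¹' A) := by
    rw [← ENNReal.tsum_mul_right, ← ENNReal.tsum_mul_left]
    exact ENNReal.tsum_le_tsum fun n =>
      (hMM.cond4 j B A hB hA hBj hAj n).trans_eq (mul_assoc _ _ _).symm
  rw [hBsum, ENNReal.top_mul hA0, top_le_iff] at key
  by_contra hne
  exact ENNReal.mul_ne_top (ENNReal.mul_ne_top ENNReal.ofReal_ne_top (measure_ne_top m B)) hne key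

theorem tsum_measure_preimage_Xs_eq_top (hMM : MarcoMartens m T Xs K) (j : ℕ) :
    ∑' n, m (T^[n] ⁻¹' Xs j) = ∞ := by
  obtain ⟨k, hk⟩ := hMM.cond3 0 j
  have hdiv := hMM.tsum_measure_preimage_eq_top_of_subset
    ((hMM.meas_Xs 0).inter (hMM.measurable_T.iterate k (hMM.meas_Xs j))) (hMM.meas_Xs 0)
    inter_subset_left subset_rfl hk.ne' hMM.cond5
  refine top_le_iff.1 (hdiv ▸ ?_)
  calc ∑' n, m (T^[n] ⁻¹' (Xs 0 ∩ T^[k] ⁻¹' Xs j)) ≤ ∑' n, m (T^[k + n] ⁻¹' Xs j) :=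
        ENNReal.tsum_le_tsum fun n => measure_mono <| by
          rw [iterate_add, preimage_comp]
          exact preimage_mono inter_subset_right
    _ ≤ ∑' n, m (T^[n] ⁻¹' Xs j) :=
        ENNReal.tsum_comp_le_tsum_of_injective (add_right_injective k) _

theorem conservative (hMM : MarcoMartens m T Xs K) : Conservative T m where
  toQuasiMeasurePreserving := hMM.quasiMeasurePreserving
  exists_mem_iterate_mem' s hs hs0 := by
    by_contra! hwand
    obtain ⟨j, hj⟩ : ∃ j, m (s ∩ Xs j) ≠ 0 := by
      by_contra! hnull
      refine hs0 (measure_mono_null (fun x hx => ?_)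
        (measure_union_null (measure_iUnion_null hnull) hMM.cover))
      by_cases hx' : x ∈ ⋃ n, Xs n
      · obtain ⟨j, hj⟩ := mem_iUnion.1 hx'
        exact Or.inl (mem_iUnion.2 ⟨j, hx, hj⟩)
      · exact Or.inr ⟨mem_univ x, hx'⟩
    have hA := hs.inter (hMM.meas_Xs j)
    have hunion := measure_iUnion (μ := m)
      (pairwise_disjoint_preimage_iterate fun x hx n hn hxn => hwand x hx.1 n hn hxn.1)
      fun n => hMM.measurable_T.iterate n hA
    rw [hMM.tsum_measure_preimage_eq_top_of_subset hA (hMM.meas_Xs j) inter_subset_right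
      subset_rfl hj (hMM.tsum_measure_preimage_Xs_eq_top j)] at hunion
    exact measure_ne_top m _ hunion

end MarcoMartens

/-- For a Marco–Martens map `T` which in addition is ergodic with respect to `m`, the σ-finite
`T`-invariant measure equivalent to `m` is unique up to a positive multiplicative constant:
if `μ₁` and `μ₂` are σ-finite `T`-invariant measures each equivalent to `m`, then `μ₁ = c μ₂`
for some constant `c > 0`. -/
theorem stmt15 {X : Type*} [MeasurableSpace X] (m : Measure X) [IsProbabilityMeasure m]
    (T : X → X) (Xs : ℕ → Set X) (K : ℕ → ℝ) (hMM : MarcoMartens m T Xs K)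
    (herg : ∀ A : Set X, MeasurableSet A → T ⁻¹' A = A → m A = 0 ∨ m Aᶜ = 0) :
    ∀ μ₁ μ₂ : Measure X, SigmaFinite μ₁ → SigmaFinite μ₂ →
      (∀ A : Set X, MeasurableSet A → μ₁ (T ⁻¹' A) = μ₁ A) →
      (∀ A : Set X, MeasurableSet A → μ₂ (T ⁻¹' A) = μ₂ A) →
      μ₁ ≪ m → m ≪ μ₁ → μ₂ ≪ m → m ≪ μ₂ →
      ∃ c : NNReal, 0 < c ∧ μ₁ = c • μ₂ := by
  intro μ₁ μ₂ _ _ hinv₁ hinv₂ h1m hm1 h2m hm2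
  have hae : ae μ₂ = ae m := le_antisymm h2m.ae_le hm2.ae_le
  have hcons : Conservative T μ₂ := hMM.conservative.congr_ae hae.symm
  have hqerg : QuasiErgodic T μ₂ := ⟨hcons.toQuasiMeasurePreserving,
    (PreErgodic.of_measure_eq_zero_or_compl herg).congr_ae hae.symm⟩
  obtain ⟨c, hc⟩ := hqerg.ae_eq_const_of_ae_eq_comp₀
    (Measure.measurable_rnDeriv μ₁ μ₂).nullMeasurable
    (hcons.rnDeriv_comp_aeEq (.of_measure_preimage_eq hMM.measurable_T hinv₁)
      (.of_measure_preimage_eq hMM.measurable_T hinv₂) (h1m.trans hm2))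
  have hμ₁ : μ₁ ≠ 0 := fun h => IsProbabilityMeasure.ne_zero m
    (Measure.absolutelyContinuous_zero_iff.1 (h ▸ hm1))
  exact Measure.exists_pos_eq_smul_of_rnDeriv_ae_eq_const (h1m.trans hm2) hμ₁ hc
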